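/- arXiv:math/0408026 — 3 statements merged into one kernel-verified Lean document; each statement's English description precedes it below -/
import Mathlib

section
/- For r ≥ 1, define f(r) = sqrt(r²-1) + arcsin(1/r) and g(r) = 2π - 2·arcsin(r/2) for r ≤ 2, g(r) = π for r ≥ 2. The infimum of 2f(r) + g(r) + r over r ∈ [1,∞) is attained at some r ∈ (1, 1.01), and the minimum value exceeds 9.3774. -/
/-!
On `(1, 2)` the derivative of `F = 2f + g + id` is `F' x = 2√(1 - 1/x²) - 1/√(1 - x²/4) + 1`,
a difference of two increasing functions, so bounding `F'` on a short interval only needs the two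
pieces at its endpoints. This shows that `F` decreases on `[1, 1.0028]` and increases on
`[1.0034, 3/2]`, while for `r ≥ 3/2` the crude bounds `t ≤ arcsin t` and `√(1 - t²) ≤ arccos t`
give `F r > 9.4 > F 1`. So `F` attains its minimum over `[1, ∞)` in `[1.0028, 1.0034]`, where
`F' ≥ -0.007` and a fifth-order bound for `arcsin` at `1.0028` give `F > 9.3774`.
-/

open Real Set

noncomputable def f (r : ℝ) : ℝ := Real.sqrt (r^2 - 1) + Real.arcsin (1/r)

noncomputable def g (r : ℝ) : ℝ :=
  if r ≤ 2 then 2*Real.pi - 2*Real.arcsin (r/2) else Real.pi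

noncomputable def m (r s θ : ℝ) : ℝ :=
  if θ ≤ Real.arccos (1/r) + Real.arccos (1/s) then
    Real.sqrt (r^2 + s^2 - 2*r*s*Real.cos θ)
  else f r + f s + (θ - Real.pi)

abbrev E3 := EuclideanSpace ℝ (Fin 3)

/-- A set `K` has thickness at least 1 (thickness = twice infimal circumradius over
triples of distinct points) iff no three distinct points of `K` lie on a common
sphere of radius less than `1/2`. -/
def ThickOne (K : Set E3) : Prop :=
  ∀ x ∈ K, ∀ y ∈ K, ∀ z ∈ K, x ≠ y → y ≠ z → x ≠ z →
    ∀ (c : E3) (ρ : ℝ), dist x c = ρ → dist y c = ρ → dist z c = ρ → 1/2 ≤ ρ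

lemma self_le_arcsin {x : ℝ} (hx₀ : 0 ≤ x) (hx₁ : x ≤ 1) : x ≤ arcsin x :=
  calc x = sin (arcsin x) := (sin_arcsin (by linarith) hx₁).symm
    _ ≤ arcsin x := sin_le (arcsin_nonneg.2 hx₀)

lemma sqrt_one_sub_sq_le_arccos {x : ℝ} (hx : 0 ≤ x) : √(1 - x ^ 2) ≤ arccos x := by
  rw [arccos_eq_arcsin hx]
  exact self_le_arcsin (sqrt_nonneg _) (sqrt_le_one.2 (by nlinarith))

lemma arcsin_le_add_pow_three_div_six_add_pow_five {x : ℝ} (hx₀ : 0 ≤ x) (hx₁ : x ≤ 1 / 2) :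
    arcsin x ≤ x + x ^ 3 / 6 + x ^ 5 := by
  let p : ℝ → ℝ := fun y => y + y ^ 3 / 6 + y ^ 5
  have hmono : MonotoneOn (fun y => p y - arcsin y) (Icc 0 x) := by
    refine monotoneOn_of_hasDerivWithinAt_nonneg (convex_Icc 0 x) (by fun_prop)
      (f' := fun y => (1 + y ^ 2 / 2 + 5 * y ^ 4) - 1 / √(1 - y ^ 2)) ?_ ?_
    · rw [interior_Icc]
      rintro y ⟨hy₀, hyx⟩
      have hp : HasDerivAt p (1 + y ^ 2 / 2 + 5 * y ^ 4) y :=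
        (((hasDerivAt_id' y).add ((hasDerivAt_pow 3 y).div_const 6)).add
          (hasDerivAt_pow 5 y)).congr_deriv (by push_cast; ring)
      exact (hp.sub (hasDerivAt_arcsin (by linarith) (by linarith))).hasDerivWithinAt
    · rw [interior_Icc]
      rintro y ⟨hy₀, hyx⟩
      have hc : 0 < √(1 - y ^ 2) := sqrt_pos.2 (by nlinarith)
      have hc2 : √(1 - y ^ 2) ^ 2 = 1 - y ^ 2 := sq_sqrt (by nlinarith)
      have hz : y ^ 2 ≤ 1 / 4 := by nlinarith
      -- `(1 + z/2 + 5z²)²(1 - z) - 1 = z²(37/4 - 21z/4 + 20z² - 25z³)` with `z = y²`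
      have hsq : 1 ≤ ((1 + y ^ 2 / 2 + 5 * y ^ 4) * √(1 - y ^ 2)) ^ 2 := by
        rw [mul_pow, hc2]
        nlinarith [pow_nonneg (sq_nonneg y) 2, pow_nonneg (sq_nonneg y) 3,
          mul_nonneg (pow_nonneg (sq_nonneg y) 2) (sub_nonneg.2 hz),
          mul_nonneg (pow_nonneg (sq_nonneg y) 4) (sub_nonneg.2 hz)]
      rw [sub_nonneg, div_le_iff₀ hc]
      exact (one_le_sq_iff₀ (by positivity)).1 hsq
  have := hmono ⟨le_rfl, hx₀⟩ ⟨hx₀, le_rfl⟩ hx₀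
  simp only [p, arcsin_zero] at this
  linarith

lemma arcsin_eq_pi_div_six_add_arcsin {x : ℝ} (hx₀ : 0 ≤ x) (hx₁ : x ≤ 1) :
    arcsin x = π / 6 + arcsin (x * (√3 / 2) - √(1 - x ^ 2) / 2) := by
  have hs : sin (arcsin x - π / 6) = x * (√3 / 2) - √(1 - x ^ 2) / 2 := by
    rw [sin_sub, sin_arcsin (by linarith) hx₁, cos_arcsin, sin_pi_div_six, cos_pi_div_six]
    ring
  rw [← hs, arcsin_sin (by linarith [arcsin_nonneg.2 hx₀, pi_pos])
    (by linarith [arcsin_le_pi_div_two x, pi_pos])]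
  ring

lemma g_eq_pi_add_two_mul_arccos (r : ℝ) : g r = π + 2 * arccos (r / 2) := by
  unfold g
  split_ifs with hr
  · rw [arccos_eq_pi_div_two_sub_arcsin]
    ring
  · rw [arccos_eq_zero.2 (by linarith)]
    ring

lemma continuous_g : Continuous g := by
  rw [show g = fun r => π + 2 * arccos (r / 2) from funext g_eq_pi_add_two_mul_arccos]
  fun_prop

noncomputable def F (r : ℝ) : ℝ := 2 * f r + g r + r

noncomputable def F' (x : ℝ) : ℝ := 2 * √(1 - (1 / x) ^ 2) - 1 / √(1 - (x / 2) ^ 2) + 1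

lemma continuousOn_F : ContinuousOn F (Ici 1) := by
  have hf : ContinuousOn f (Ici 1) := by
    unfold f
    refine (by fun_prop : Continuous fun r : ℝ => √(r ^ 2 - 1)).continuousOn.add
      (continuous_arcsin.comp_continuousOn (continuousOn_const.div continuousOn_id ?_))
    intro r (hr : 1 ≤ r)
    exact (zero_lt_one.trans_le hr).ne'
  exact ((continuousOn_const.mul hf).add continuous_g.continuousOn).add continuousOn_id

lemma hasDerivAt_f {x : ℝ} (hx : 1 < x) : HasDerivAt f (√(1 - (1 / x) ^ 2)) x := by
  have hx₀ : 0 < x := by linarith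
  have hs : 0 < √(x ^ 2 - 1) := sqrt_pos.2 (by nlinarith)
  have hs2 : √(x ^ 2 - 1) ^ 2 = x ^ 2 - 1 := sq_sqrt (by nlinarith)
  have hu : √(1 - (1 / x) ^ 2) = √(x ^ 2 - 1) / x := by
    rw [show 1 - (1 / x) ^ 2 = (x ^ 2 - 1) / x ^ 2 by field_simp, sqrt_div' _ (sq_nonneg x),
      sqrt_sq hx₀.le]
  have hinv : 1 / x < 1 := by rw [div_lt_one hx₀]; exact hx
  have h₁ := ((hasDerivAt_pow 2 x).sub_const 1).sqrt (by nlinarith)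
  have h₂ := (hasDerivAt_arcsin (x := 1 / x) (by linarith [one_div_pos.2 hx₀]) hinv.ne).comp x
    ((hasDerivAt_const x (1 : ℝ)).div (hasDerivAt_id x) hx₀.ne')
  refine (h₁.add h₂).congr_deriv ?_
  rw [hu]
  field_simp
  rw [hs2]
  ring

lemma hasDerivAt_g {x : ℝ} (hx₀ : -2 < x) (hx₂ : x < 2) :
    HasDerivAt g (-(1 / √(1 - (x / 2) ^ 2))) x := by
  rw [show g = fun r => π + 2 * arccos (r / 2) from funext g_eq_pi_add_two_mul_arccos]
  refine ((((hasDerivAt_arccos (x := x / 2) (by linarith) (by linarith)).comp x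
    ((hasDerivAt_id x).div_const 2)).const_mul 2).const_add π).congr_deriv ?_
  ring

lemma hasDerivAt_F {x : ℝ} (hx₁ : 1 < x) (hx₂ : x < 2) : HasDerivAt F (F' x) x := by
  refine ((((hasDerivAt_f hx₁).const_mul 2).add (hasDerivAt_g (by linarith) hx₂)).add
    (hasDerivAt_id x)).congr_deriv ?_
  rw [F']
  ring

lemma le_F' {p q c₁ c₂ x : ℝ} (hp : 0 < p) (hc₁ : c₁ ^ 2 ≤ 1 - (1 / p) ^ 2) (hc₂ : 0 < c₂)
    (hc₂' : c₂ ^ 2 ≤ 1 - (q / 2) ^ 2) (hx : x ∈ Icc p q) : 2 * c₁ - 1 / c₂ + 1 ≤ F' x := by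
  obtain ⟨hpx, hxq⟩ := hx
  have hx₀ : 0 < x := hp.trans_le hpx
  have h₁ : c₁ ≤ √(1 - (1 / x) ^ 2) :=
    (le_sqrt_of_sq_le hc₁).trans (sqrt_le_sqrt (by gcongr))
  have h₂ : c₂ ≤ √(1 - (x / 2) ^ 2) :=
    (le_sqrt_of_sq_le hc₂').trans (sqrt_le_sqrt (by gcongr))
  have := one_div_le_one_div_of_le hc₂ h₂
  rw [F']
  linarith

lemma F'_le {p q c₁ c₂ x : ℝ} (hp : 0 < p) (hq : q < 2) (hc₁ : 0 ≤ c₁)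
    (hc₁' : 1 - (1 / q) ^ 2 ≤ c₁ ^ 2) (hc₂ : 0 ≤ c₂) (hc₂' : 1 - (p / 2) ^ 2 ≤ c₂ ^ 2)
    (hx : x ∈ Icc p q) : F' x ≤ 2 * c₁ - 1 / c₂ + 1 := by
  obtain ⟨hpx, hxq⟩ := hx
  have hx₀ : 0 < x := hp.trans_le hpx
  have hq₀ : 0 < q := hx₀.trans_le hxq
  have h₁ : √(1 - (1 / x) ^ 2) ≤ c₁ :=
    (sqrt_le_sqrt (by gcongr)).trans ((sqrt_le_left hc₁).2 hc₁')
  have h₂ : √(1 - (x / 2) ^ 2) ≤ c₂ :=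
    (sqrt_le_sqrt (by gcongr)).trans ((sqrt_le_left hc₂).2 hc₂')
  have := one_div_le_one_div_of_le (sqrt_pos.2 (by nlinarith)) h₂
  rw [F']
  linarith

lemma strictAntiOn_F : StrictAntiOn F (Icc 1 1.0028) := by
  refine strictAntiOn_of_deriv_neg (convex_Icc _ _) (continuousOn_F.mono Icc_subset_Ici_self) ?_
  rw [interior_Icc]
  intro x hx
  rw [(hasDerivAt_F hx.1 (by linarith [hx.2])).deriv]
  exact (F'_le (c₁ := 0.0746765) (c₂ := 0.8660255) one_pos (by norm_num) (by norm_num)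
    (by norm_num) (by norm_num) (by norm_num) (Ioo_subset_Icc_self hx)).trans_lt (by norm_num)

lemma F'_pos {x : ℝ} (hx : x ∈ Icc (1.0034 : ℝ) (3 / 2)) : 0 < F' x := by
  obtain ⟨hx₁, hx₂⟩ := hx
  rcases le_total x 1.02 with h | h
  · exact lt_of_lt_of_le (by norm_num) (le_F' (c₁ := 0.08225) (c₂ := 0.86017) (by norm_num)
      (by norm_num) (by norm_num) (by norm_num) ⟨hx₁, h⟩)
  rcases le_total x 1.38 with h' | h'
  · exact lt_of_lt_of_le (by norm_num) (le_F' (c₁ := 0.197) (c₂ := 0.7238) (by norm_num)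
      (by norm_num) (by norm_num) (by norm_num) ⟨h, h'⟩)
  · exact lt_of_lt_of_le (by norm_num) (le_F' (c₁ := 0.68) (c₂ := 0.66) (by norm_num)
      (by norm_num) (by norm_num) (by norm_num) ⟨h', hx₂⟩)

lemma strictMonoOn_F : StrictMonoOn F (Icc 1.0034 (3 / 2)) := by
  refine strictMonoOn_of_deriv_pos (convex_Icc _ _)
    (continuousOn_F.mono (Icc_subset_Ici_iff (by norm_num) |>.2 (by norm_num))) ?_
  rw [interior_Icc]
  intro x hx
  rw [(hasDerivAt_F (by linarith [hx.1]) (by linarith [hx.2])).deriv]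
  exact F'_pos (Ioo_subset_Icc_self hx)

lemma F_one : F 1 = 8 * π / 3 + 1 := by
  have h : arccos (1 / 2) = π / 3 := by
    rw [← cos_pi_div_three, arccos_cos (by positivity) (by linarith [pi_pos])]
  rw [F, f, g_eq_pi_add_two_mul_arccos, h]
  norm_num
  ring

lemma lt_F_of_three_halves_le {r : ℝ} (hr : 3 / 2 ≤ r) : (9.4 : ℝ) < F r := by
  have hr₀ : 0 < r := by linarith
  set s := √(r ^ 2 - 1)
  set w := √(1 - (r / 2) ^ 2)
  have hs₀ : 0 ≤ s := sqrt_nonneg _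
  have hw₀ : 0 ≤ w := sqrt_nonneg _
  have hs2 : s ^ 2 = r ^ 2 - 1 := sq_sqrt (by nlinarith)
  have hsw : 1.73 ≤ s + w := by
    rcases le_or_gt r 2 with h2 | h2
    · have hw2 : w ^ 2 = 1 - (r / 2) ^ 2 := sq_sqrt (by nlinarith)
      -- `2s ≥ 3w` is `25 r² ≥ 52`, and then `(s + w)² = 3r²/4 + 2sw ≥ 3`
      have h23 : 3 * w ≤ 2 * s := by nlinarith
      nlinarith
    · have : 1.73 ≤ s := le_sqrt_of_sq_le (by nlinarith)
      linarith
  have hinv : 2.82 ≤ 2 * (1 / r) + r := by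
    rw [← sub_nonneg,
      show 2 * (1 / r) + r - 2.82 = (r ^ 2 - 2.82 * r + 2) / r by field_simp; ring]
    exact div_nonneg (by nlinarith [sq_nonneg (r - 1.41)]) hr₀.le
  have harcsin : 1 / r ≤ arcsin (1 / r) :=
    self_le_arcsin (by positivity) (by rw [div_le_one hr₀]; linarith)
  have harccos : w ≤ arccos (r / 2) := sqrt_one_sub_sq_le_arccos (by positivity)
  rw [F, f, g_eq_pi_add_two_mul_arccos]
  linarith [pi_gt_d2]

lemma le_F_at_1_0028 : (9.377418 : ℝ) ≤ F 1.0028 := by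
  have hs : (0.0748855126 : ℝ) ≤ √(1.0028 ^ 2 - 1) := le_sqrt_of_sq_le (by norm_num)
  have hu : √(1 - (1 / 1.0028) ^ 2) ≤ (0.0746765 : ℝ) :=
    (sqrt_le_left (by norm_num)).2 (by norm_num)
  have h3 : √3 ≤ (1.7320508076 : ℝ) := (sqrt_le_left (by norm_num)).2 (by norm_num)
  have hw : (0.8652156031 : ℝ) ≤ √(1 - (1.0028 / 2) ^ 2) := le_sqrt_of_sq_le (by norm_num)
  have hδ : 1.0028 / 2 * (√3 / 2) - √(1 - (1.0028 / 2) ^ 2) / 2 ≤ (0.0016174 : ℝ) := by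
    linarith
  have hf : arcsin (1 / 1.0028) = π / 2 - arcsin √(1 - (1 / 1.0028) ^ 2) := by
    rw [← arccos_eq_arcsin (by norm_num), arccos_eq_pi_div_two_sub_arcsin]
    ring
  -- `1.0028 / 2` is too far from `0` for the Taylor bound, so `π / 6` is split off first
  have hg := arcsin_eq_pi_div_six_add_arcsin (x := 1.0028 / 2) (by norm_num) (by norm_num)
  have h₁ : arcsin √(1 - (1 / 1.0028) ^ 2) ≤ (0.07474823 : ℝ) :=
    calc _ ≤ arcsin 0.0746765 := monotone_arcsin hu
      _ ≤ _ := arcsin_le_add_pow_three_div_six_add_pow_five (by norm_num) (by norm_num)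
      _ ≤ _ := by norm_num
  have h₂ : arcsin (1.0028 / 2 * (√3 / 2) - √(1 - (1.0028 / 2) ^ 2) / 2) ≤ (0.00161741 : ℝ) :=
    calc _ ≤ arcsin 0.0016174 := monotone_arcsin hδ
      _ ≤ _ := arcsin_le_add_pow_three_div_six_add_pow_five (by norm_num) (by norm_num)
      _ ≤ _ := by norm_num
  rw [F, f, g, if_pos (by norm_num), hf, hg]
  linarith [pi_gt_d6]

lemma lt_F_of_mem_Icc {r : ℝ} (hr : r ∈ Icc (1.0028 : ℝ) 1.0034) : (9.3774 : ℝ) < F r := by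
  have hD : Icc (1.0028 : ℝ) 1.0034 ⊆ Ici 1 :=
    Icc_subset_Ici_iff (by norm_num) |>.2 (by norm_num)
  have hslope := (convex_Icc (1.0028 : ℝ) 1.0034).mul_sub_le_image_sub_of_le_deriv
    (continuousOn_F.mono hD) (C := -0.007) ?_ ?_ 1.0028 ⟨le_rfl, by norm_num⟩ r hr hr.1
  · linarith [le_F_at_1_0028, hr.2]
  all_goals rw [interior_Icc]
  · intro x hx
    exact (hasDerivAt_F (by linarith [hx.1]) (by linarith [hx.2])).differentiableAt
      |>.differentiableWithinAt
  · intro x hx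
    rw [(hasDerivAt_F (by linarith [hx.1]) (by linarith [hx.2])).deriv]
    exact le_trans (by norm_num) (le_F' (c₁ := 0.0746764) (c₂ := 0.8650416) (by norm_num)
      (by norm_num) (by norm_num) (by norm_num) (Ioo_subset_Icc_self hx))

lemma exists_isMinOn_F : ∃ r ∈ Icc (1.0028 : ℝ) 1.0034, IsMinOn F (Ici 1) r := by
  obtain ⟨r, hr, hmin⟩ := (isCompact_Icc (a := (1 : ℝ)) (b := 3 / 2)).exists_isMinOn
    (nonempty_Icc.2 (by norm_num)) (continuousOn_F.mono Icc_subset_Ici_self)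
  have hmin' : ∀ x ∈ Icc (1 : ℝ) (3 / 2), F r ≤ F x := isMinOn_iff.1 hmin
  refine ⟨r, ⟨?_, ?_⟩, isMinOn_iff.2 fun x (hx : 1 ≤ x) => ?_⟩
  · by_contra! h
    exact (strictAntiOn_F ⟨hr.1, h.le⟩ ⟨by norm_num, le_rfl⟩ h).not_ge
      (hmin' _ ⟨by norm_num, by norm_num⟩)
  · by_contra! h
    exact (strictMonoOn_F ⟨le_rfl, by norm_num⟩ ⟨h.le, hr.2⟩ h).not_ge
      (hmin' _ ⟨by norm_num, by norm_num⟩)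
  · rcases le_or_gt x (3 / 2) with hx' | hx'
    · exact hmin' x ⟨hx, hx'⟩
    · have := hmin' 1 ⟨le_rfl, by norm_num⟩
      linarith [lt_F_of_three_halves_le hx'.le, F_one, pi_lt_d2]

/-- The infimum of `2f(r) + g(r) + r` over `r ∈ [1,∞)` is attained at some
`r ∈ (1, 1.01)`, and the minimum value exceeds `9.3774`. -/
theorem stmt6 :
    (∃ r ∈ Set.Ioo (1:ℝ) 1.01,
        IsMinOn (fun x => 2 * f x + g x + x) (Set.Ici 1) r) ∧
      ∀ r ∈ Set.Ici (1:ℝ), (9.3774 : ℝ) < 2 * f r + g r + r := by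
  obtain ⟨r, hr, hmin⟩ := exists_isMinOn_F
  refine ⟨⟨r, ⟨by linarith [hr.1], by linarith [hr.2]⟩, hmin⟩, fun x hx => ?_⟩
  exact (lt_F_of_mem_Icc hr).trans_le (hmin hx)
end

section
/- Let K be a closed curve of thickness at least 1 and suppose a, p, b ∈ K are collinear with p strictly between a and b on the line (a reversed trisecant, so p is not on the subarc of K from a to b). Then the arclength of the subarc of K from a to b avoiding p is at least π. -/
open Real Set

/-!
Seen from `p`, the arc from `a` to `b` sweeps out the angle `∠ a p b = π`. For two points
`x, y` of the curve, the law of sines gives `dist x y = 2 R sin ∠ x p y`, where `R ≥ 1/2` is the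
circumradius of `x p y`; so every chord is at least the sine of the angle it subtends at `p`.
On a partition fine enough that these angles are below `δ`, `sin θ ≥ (1 - δ²/6) θ`, so the
inscribed polygons have length at least `(1 - δ²/6) π`; let `δ → 0`.
-/

open EuclideanGeometry Filter Topology

theorem Real.one_sub_sq_div_six_mul_le_sin {x δ : ℝ} (hx : 0 ≤ x) (hxδ : x ≤ δ) :
    (1 - δ ^ 2 / 6) * x ≤ Real.sin x := by
  rcases hx.eq_or_lt with rfl | hx
  · simp
  have hcube := Real.sin_gt_sub_cube hx
  nlinarith [mul_le_mul_of_nonneg_left (pow_le_pow_left₀ hx.le hxδ 2) hx.le]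

theorem exists_monotone_Icc_partition {s t d : ℝ} (hst : s ≤ t) (hd : 0 < d) :
    ∃ (n : ℕ) (u : ℕ → ℝ), Monotone u ∧ (∀ i, u i ∈ Icc s t) ∧ u 0 = s ∧ u n = t ∧
      ∀ i, dist (u i) (u (i + 1)) < d := by
  obtain ⟨n, hn⟩ := exists_nat_gt ((t - s) / d)
  have hn0 : (0 : ℝ) < n := (div_nonneg (sub_nonneg.2 hst) hd.le).trans_lt hn
  set h := (t - s) / n
  have hh : 0 ≤ h := div_nonneg (sub_nonneg.2 hst) hn0.le
  have hhd : h < d := by rw [div_lt_iff₀ hn0]; rw [div_lt_iff₀ hd] at hn; linarith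
  have hnh : n * h = t - s := by simp only [h]; field_simp
  refine ⟨n, fun i => s + (min i n : ℕ) * h, fun i j hij => ?_, fun i => ⟨?_, ?_⟩,
    by simp, by simp [hnh], fun i => ?_⟩
  · dsimp only
    gcongr
  · exact le_add_of_nonneg_right (by positivity)
  · have : ((min i n : ℕ) : ℝ) ≤ n := by exact_mod_cast min_le_right i n
    nlinarith
  · have h₁ : ((min i n : ℕ) : ℝ) ≤ (min (i + 1) n : ℕ) := by gcongr; omega
    have h₂ : ((min (i + 1) n : ℕ) : ℝ) ≤ (min i n : ℕ) + 1 := by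
      exact_mod_cast (by omega : min (i + 1) n ≤ min i n + 1)
    rw [Real.dist_eq, abs_sub_comm, abs_of_nonneg (by nlinarith)]
    nlinarith

section
variable {V P : Type*} [NormedAddCommGroup V] [InnerProductSpace ℝ V] [MetricSpace P]
  [NormedAddTorsor V P]

theorem EuclideanGeometry.angle_le_sum_angle_succ {v : ℕ → P} {p : P} (h0 : v 0 ≠ p) (n : ℕ) :
    ∠ (v 0) p (v n) ≤ ∑ i ∈ Finset.range n, ∠ (v i) p (v (i + 1)) := by
  induction n with
  | zero => simp [angle_self_of_ne h0]
  | succ n ih =>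
    rw [Finset.sum_range_succ]
    linarith [angle_le_angle_add_angle p (v 0) (v n) (v (n + 1))]

theorem IsCompact.exists_pos_forall_dist_lt_angle_lt {α : Type*} [PseudoMetricSpace α]
    {S : Set α} (hS : IsCompact S) {γ : α → P} (hγ : ContinuousOn γ S) {p : P}
    (hp : p ∉ γ '' S) {ε : ℝ} (hε : 0 < ε) :
    ∃ d > 0, ∀ τ ∈ S, ∀ τ' ∈ S, dist τ τ' < d → ∠ (γ τ) p (γ τ') < ε := by
  have hne : ∀ τ ∈ S, γ τ ≠ p := fun τ hτ h => hp ⟨τ, hτ, h⟩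
  have hcont : ContinuousOn (fun x : α × α => ∠ (γ x.1) p (γ x.2)) (S ×ˢ S) := by
    have hf : ContinuousOn (fun x : α × α => (γ x.1, p, γ x.2)) (S ×ˢ S) :=
      (hγ.comp continuousOn_fst mapsTo_fst_prod).prodMk
        (continuousOn_const.prodMk (hγ.comp continuousOn_snd mapsTo_snd_prod))
    intro x hx
    exact ContinuousAt.comp_continuousWithinAt (x := x) (f := fun x : α × α => (γ x.1, p, γ x.2))
      (continuousAt_angle (hne _ hx.1) (hne _ hx.2)) (hf x hx)
  obtain ⟨d, hd, hclose⟩ :=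
    Metric.uniformContinuousOn_iff.mp ((hS.prod hS).uniformContinuousOn_of_continuous hcont) ε hε
  refine ⟨d, hd, fun τ hτ τ' hτ' hττ' => ?_⟩
  have := hclose (τ, τ') ⟨hτ, hτ'⟩ (τ, τ) ⟨hτ, hτ⟩ (by simpa [Prod.dist_eq, dist_comm] using hττ')
  simpa [angle_self_of_ne (hne τ hτ), abs_of_nonneg (angle_nonneg _ _ _)] using this

theorem ofReal_angle_le_eVariationOn_of_sin_angle_le_dist {γ : ℝ → P} {p : P} {s t : ℝ}
    (hst : s ≤ t) (hγ : ContinuousOn γ (Icc s t)) (hp : p ∉ γ '' Icc s t)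
    (hsin : ∀ τ ∈ Icc s t, ∀ τ' ∈ Icc s t, Real.sin (∠ (γ τ) p (γ τ')) ≤ dist (γ τ) (γ τ')) :
    ENNReal.ofReal (∠ (γ s) p (γ t)) ≤ eVariationOn γ (Icc s t) := by
  set A := ∠ (γ s) p (γ t)
  have hlim : Tendsto (fun δ : ℝ => ENNReal.ofReal ((1 - δ ^ 2 / 6) * A)) (𝓝[>] 0)
      (𝓝 (ENNReal.ofReal A)) := by
    have hcont : Continuous fun δ : ℝ => ENNReal.ofReal ((1 - δ ^ 2 / 6) * A) :=
      ENNReal.continuous_ofReal.comp (by fun_prop)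
    simpa using (hcont.tendsto 0).mono_left nhdsWithin_le_nhds
  refine le_of_tendsto hlim ?_
  filter_upwards [Ioc_mem_nhdsGT one_pos] with δ ⟨hδ0, hδ1⟩
  obtain ⟨d, hd, hsmall⟩ := isCompact_Icc.exists_pos_forall_dist_lt_angle_lt hγ hp hδ0
  obtain ⟨n, u, hmono, hmem, hu0, hun, hstep⟩ := exists_monotone_Icc_partition hst hd
  set θ : ℕ → ℝ := fun i => ∠ (γ (u i)) p (γ (u (i + 1)))
  have hθ : ∀ i, θ i < δ := fun i => hsmall _ (hmem i) _ (hmem (i + 1)) (hstep i)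
  have hchain : A ≤ ∑ i ∈ Finset.range n, θ i := by
    have h0 : γ (u 0) ≠ p := fun h => hp ⟨u 0, hmem 0, h⟩
    simpa [A, hu0, hun] using angle_le_sum_angle_succ (v := γ ∘ u) h0 n
  have hsum : (1 - δ ^ 2 / 6) * A ≤ ∑ i ∈ Finset.range n, dist (γ (u (i + 1))) (γ (u i)) :=
    calc (1 - δ ^ 2 / 6) * A ≤ ∑ i ∈ Finset.range n, (1 - δ ^ 2 / 6) * θ i := by
          rw [← Finset.mul_sum]; gcongr; nlinarith
      _ ≤ ∑ i ∈ Finset.range n, dist (γ (u (i + 1))) (γ (u i)) := by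
          refine Finset.sum_le_sum fun i _ => ?_
          rw [dist_comm]
          exact (Real.one_sub_sq_div_six_mul_le_sin (angle_nonneg _ _ _) (hθ i).le).trans
            (hsin _ (hmem i) _ (hmem (i + 1)))
  calc ENNReal.ofReal ((1 - δ ^ 2 / 6) * A)
      ≤ ENNReal.ofReal (∑ i ∈ Finset.range n, dist (γ (u (i + 1))) (γ (u i))) :=
        ENNReal.ofReal_le_ofReal hsum
    _ = ∑ i ∈ Finset.range n, edist (γ (u (i + 1))) (γ (u i)) := by
        rw [ENNReal.ofReal_sum_of_nonneg fun i _ => dist_nonneg]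
        simp only [edist_dist]
    _ ≤ eVariationOn γ (Icc s t) := eVariationOn.sum_le hmono hmem

end

theorem sin_angle_le_dist_of_thickOne {K : Set E3} (hK : ThickOne K) {x p y : E3}
    (hx : x ∈ K) (hp : p ∈ K) (hy : y ∈ K) (hxp : x ≠ p) (hyp : y ≠ p) :
    Real.sin (∠ x p y) ≤ dist x y := by
  by_cases hcol : Collinear ℝ ({x, p, y} : Set E3)
  · rcases collinear_iff_eq_or_eq_or_sin_eq_zero.mp hcol with h | h | h
    · exact (hxp h).elim
    · exact (hyp h).elim
    · exact h ▸ dist_nonneg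
  have hsin : 0 < Real.sin (∠ x p y) :=
    (sin_nonneg_of_nonneg_of_le_pi (angle_nonneg _ _ _) (angle_le_pi _ _ _)).lt_of_ne'
      fun h => hcol (collinear_iff_eq_or_eq_or_sin_eq_zero.mpr (Or.inr (Or.inr h)))
  let T : Affine.Triangle ℝ E3 := ⟨![x, p, y], affineIndependent_iff_not_collinear_set.mpr hcol⟩
  have hR : 1 / 2 ≤ T.circumradius :=
    hK x hx p hp y hy hxp (Ne.symm hyp) (T.independent.injective.ne (by decide : (0 : Fin 3) ≠ 2))
      T.circumcenter _ (T.dist_circumcenter_eq_circumradius 0)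
      (T.dist_circumcenter_eq_circumradius 1) (T.dist_circumcenter_eq_circumradius 2)
  have hsine : dist x y / Real.sin (∠ x p y) = 2 * T.circumradius :=
    T.dist_div_sin_angle_eq_two_mul_circumradius (i₁ := 0) (i₂ := 1) (i₃ := 2)
      (by decide) (by decide) (by decide)
  rw [div_eq_iff hsin.ne'] at hsine
  nlinarith

theorem stmt11_general (γ : ℝ → E3) (hcont : Continuous γ)
    (hthick : ThickOne (Set.range γ))
    (p a b : E3) (s t : ℝ) (hst : s ≤ t)
    (hγs : γ s = a) (hγt : γ t = b)
    (hp : p ∈ Set.range γ) (hpnot : p ∉ γ '' Set.Icc s t)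
    (hbtw : Sbtw ℝ a p b) :
    ENNReal.ofReal Real.pi ≤ eVariationOn γ (Set.Icc s t) := by
  have hne : ∀ τ ∈ Icc s t, γ τ ≠ p := fun τ hτ h => hpnot ⟨τ, hτ, h⟩
  have hangle : ∠ (γ s) p (γ t) = π := by
    rw [hγs, hγt]; exact angle_eq_pi_iff_sbtw.mpr hbtw
  rw [← hangle]
  exact ofReal_angle_le_eVariationOn_of_sin_angle_le_dist hst hcont.continuousOn hpnot
    fun τ hτ τ' hτ' => sin_angle_le_dist_of_thickOne hthick (mem_range_self τ) hp
      (mem_range_self τ') (hne τ hτ) (hne τ' hτ')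

/-- For a closed curve of thickness at least 1 with a reversed trisecant `a p b`
(so `p` lies strictly between `a` and `b` on a line, and `p` is not on the subarc
of the curve from `a` to `b`), that subarc has length at least `π`. -/
theorem stmt11 (γ : ℝ → E3) (L : ℝ) (hL : 0 < L) (hcont : Continuous γ)
    (hper : Function.Periodic γ L) (hinj : Set.InjOn γ (Set.Ico 0 L))
    (hthick : ThickOne (Set.range γ))
    (p a b : E3) (s t : ℝ) (hst : s ≤ t)
    (hγs : γ s = a) (hγt : γ t = b)
    (hp : p ∈ Set.range γ) (hpnot : p ∉ γ '' Set.Icc s t)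
    (hbtw : Sbtw ℝ a p b) :
    ENNReal.ofReal Real.pi ≤ eVariationOn γ (Set.Icc s t) :=
  stmt11_general γ hcont hthick p a b s t hst hγs hγt hp hpnot hbtw
end

section
/- Let K be a closed curve of unit thickness and p, a, b ∈ K with p not on the oriented subarc of K from a to b. Then the chordal distance satisfies: the length of the subarc from a to b is at least the spherical distance 2·arcsin(|Πa - Πb|/2) where Π is radial projection to the unit sphere around p, and moreover |Πa - Πb| ≤ |a - b| whenever |a-p| ≥ 1 and |b-p| ≥ 1. -/
open Real Set

/-!
Thickness means that every triangle with vertices on the curve has circumradius at least `1/2`, so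
by the law of sines `sin ∠xpy ≤ |x - y|` for all `x, y, p` on the curve. Seen from `p`, the angle
`∠ (γ u) p (γ v)` satisfies the triangle inequality and `sin θ ≈ θ` for nearby parameters, so
subdividing `[s, t]` finely shows that the length of the arc dominates `∠apb`, which is the
spherical distance `2 arcsin (|Πa - Πb| / 2)`. For the second claim, with `u = a - p` and
`v = b - p`, one has `|u - v|² - |u/|u| - v/|v||² ≥ (|u| - |v|)²` as soon as `|u|, |v| ≥ 1`.
-/

open EuclideanGeometry InnerProductGeometry
open scoped RealInnerProductSpace

section InnerProductSpace

variable {V : Type*} [NormedAddCommGroup V] [InnerProductSpace ℝ V]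

theorem InnerProductGeometry.two_mul_arcsin_norm_sub_div_two_eq_angle {x y : V} (hx : ‖x‖ = 1)
    (hy : ‖y‖ = 1) : 2 * arcsin (‖x - y‖ / 2) = angle x y := by
  have hθ0 := angle_nonneg x y
  have hθπ := angle_le_pi x y
  have hsq : ‖x - y‖ ^ 2 = 2 - 2 * cos (angle x y) := by
    rw [norm_sub_sq_real, cos_angle, hx, hy]; ring
  have hhalf : ‖x - y‖ / 2 = sin (angle x y / 2) := by
    rw [sin_half_eq_sqrt (by linarith) (by linarith [pi_pos]), eq_comm, sqrt_eq_iff_eq_sq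
      (by linarith [cos_le_one (angle x y)]) (by positivity)]
    linarith
  rw [hhalf, arcsin_sin (by linarith [pi_pos]) (by linarith)]
  ring

theorem InnerProductGeometry.angle_normalize_normalize (x y : V) :
    angle (NormedSpace.normalize x) (NormedSpace.normalize y) = angle x y := by
  rcases eq_or_ne x 0 with rfl | hx
  · simp
  rcases eq_or_ne y 0 with rfl | hy
  · simp
  rw [NormedSpace.normalize, NormedSpace.normalize, angle_smul_left_of_pos _ _ (by positivity),
    angle_smul_right_of_pos _ _ (by positivity)]

theorem NormedSpace.norm_normalize_sub_normalize_le {x y : V} (hx : 1 ≤ ‖x‖) (hy : 1 ≤ ‖y‖) :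
    ‖NormedSpace.normalize x - NormedSpace.normalize y‖ ≤ ‖x - y‖ := by
  have hr : 1 ≤ ‖x‖ * ‖y‖ := one_le_mul_of_one_le_of_one_le hx hy
  set q := ⟪x, y⟫ / (‖x‖ * ‖y‖) with hq
  have hq1 : q ≤ 1 := (div_le_one (by positivity)).2 (real_inner_le_norm x y)
  have hinner : ⟪x, y⟫ = q * (‖x‖ * ‖y‖) := by rw [hq, div_mul_cancel₀ _ (by positivity)]
  have hnormalized : ‖NormedSpace.normalize x - NormedSpace.normalize y‖ ^ 2 = 2 - 2 * q := by
    rw [norm_sub_sq_real, NormedSpace.norm_normalize_eq_one_iff.2 (norm_pos_iff.1 (by linarith)),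
      NormedSpace.norm_normalize_eq_one_iff.2 (norm_pos_iff.1 (by linarith)),
      NormedSpace.normalize, NormedSpace.normalize, real_inner_smul_left, real_inner_smul_right,
      hq]
    field_simp
    ring
  refine (sq_le_sq₀ (norm_nonneg _) (norm_nonneg _)).1 ?_
  rw [hnormalized, norm_sub_sq_real, hinner]
  nlinarith [sq_nonneg (‖x‖ - ‖y‖), mul_le_mul_of_nonneg_left hr (sub_nonneg.2 hq1)]

noncomputable def radialProj (p x : V) : V := p + (dist x p)⁻¹ • (x - p)

theorem dist_radialProj (p x y : V) : dist (radialProj p x) (radialProj p y) =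
    ‖NormedSpace.normalize (x - p) - NormedSpace.normalize (y - p)‖ := by
  rw [radialProj, radialProj, dist_add_left, dist_eq_norm, dist_eq_norm x, dist_eq_norm y]
  rfl

theorem two_mul_arcsin_dist_radialProj_div_two {p x y : V} (hx : x ≠ p) (hy : y ≠ p) :
    2 * arcsin (dist (radialProj p x) (radialProj p y) / 2) = ∠ x p y := by
  rw [dist_radialProj, two_mul_arcsin_norm_sub_div_two_eq_angle
    (NormedSpace.norm_normalize_eq_one_iff.2 (sub_ne_zero.2 hx))
    (NormedSpace.norm_normalize_eq_one_iff.2 (sub_ne_zero.2 hy)), angle_normalize_normalize]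
  rfl

theorem dist_radialProj_le {p x y : V} (hx : 1 ≤ dist x p) (hy : 1 ≤ dist y p) :
    dist (radialProj p x) (radialProj p y) ≤ dist x y := by
  rw [dist_radialProj, dist_eq_norm x y, ← sub_sub_sub_cancel_right x y p]
  rw [dist_eq_norm] at hx hy
  exact NormedSpace.norm_normalize_sub_normalize_le hx hy

theorem exists_pos_angle_lt_of_continuous {γ : ℝ → V} {p : V} {s t ε : ℝ} (hγ : Continuous γ)
    (hpγ : ∀ u ∈ Icc s t, γ u ≠ p) (hε : 0 < ε) :
    ∃ δ > 0, ∀ u ∈ Icc s t, ∀ v ∈ Icc s t, |u - v| < δ → ∠ (γ u) p (γ v) < ε := by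
  have hF : ContinuousOn (fun q : ℝ × ℝ => ∠ (γ q.1) p (γ q.2)) (Icc s t ×ˢ Icc s t) :=
    fun q hq => (ContinuousAt.comp (f := fun q : ℝ × ℝ => (γ q.1, p, γ q.2))
      (continuousAt_angle (hpγ _ hq.1) (hpγ _ hq.2)) (by fun_prop)).continuousWithinAt
  obtain ⟨δ, hδ, hclose⟩ := Metric.uniformContinuousOn_iff.1
    ((isCompact_Icc.prod isCompact_Icc).uniformContinuousOn_of_continuous hF) ε hε
  refine ⟨δ, hδ, fun u hu v hv huv => ?_⟩
  have h := hclose (u, v) ⟨hu, hv⟩ (u, u) ⟨hu, hu⟩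
    (by simpa [Prod.dist_eq, Real.dist_eq, abs_sub_comm] using huv)
  rw [angle_self_of_ne (hpγ u hu), Real.dist_eq, sub_zero] at h
  exact (le_abs_self _).trans_lt h

end InnerProductSpace

section Variation

variable {α : Type*} [PseudoMetricSpace α] {γ : ℝ → α} {θ : ℝ → ℝ → ℝ} {s t : ℝ}

theorem ofReal_mul_le_eVariationOn_of_triangle {c δ : ℝ} (hc : 0 ≤ c) (hδ : 0 < δ)
    (htri : ∀ x ∈ Icc s t, ∀ y ∈ Icc s t, ∀ z ∈ Icc s t, θ x z ≤ θ x y + θ y z)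
    (hloc : ∀ x ∈ Icc s t, ∀ y ∈ Icc s t, |x - y| < δ → c * θ x y ≤ dist (γ x) (γ y))
    {x y : ℝ} (hx : x ∈ Icc s t) (hy : y ∈ Icc s t) (hxy : x ≤ y) :
    ENNReal.ofReal (c * θ x y) ≤ eVariationOn γ (Icc x y) := by
  have near : ∀ x ∈ Icc s t, ∀ y ∈ Icc s t, x ≤ y → y - x < δ →
      ENNReal.ofReal (c * θ x y) ≤ eVariationOn γ (Icc x y) := fun x hx y hy hxy hxyδ =>
    calc ENNReal.ofReal (c * θ x y) ≤ edist (γ x) (γ y) := by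
          rw [edist_dist]
          refine ENNReal.ofReal_le_ofReal (hloc x hx y hy ?_)
          rwa [abs_sub_comm, abs_of_nonneg (sub_nonneg.2 hxy)]
      _ ≤ eVariationOn γ (Icc x y) :=
          eVariationOn.edist_le γ (left_mem_Icc.2 hxy) (right_mem_Icc.2 hxy)
  obtain ⟨n, hn⟩ := exists_nat_ge ((y - x) / (δ / 2))
  rw [div_le_iff₀ (half_pos hδ)] at hn
  induction n generalizing x with
  | zero => exact near x hx y hy hxy (by simp at hn; linarith)
  | succ n ih =>
    by_cases hxyδ : y - x < δ
    · exact near x hx y hy hxy hxyδ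
    have hxz : x ≤ x + δ / 2 := by linarith
    have hzy : x + δ / 2 ≤ y := by linarith
    have hz : x + δ / 2 ∈ Icc s t := ⟨hx.1.trans hxz, hzy.trans hy.2⟩
    calc ENNReal.ofReal (c * θ x y)
        ≤ ENNReal.ofReal (c * θ x (x + δ / 2) + c * θ (x + δ / 2) y) := by
          rw [← mul_add]
          exact ENNReal.ofReal_le_ofReal (mul_le_mul_of_nonneg_left (htri x hx _ hz y hy) hc)
      _ ≤ ENNReal.ofReal (c * θ x (x + δ / 2)) + ENNReal.ofReal (c * θ (x + δ / 2) y) :=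
          ENNReal.ofReal_add_le
      _ ≤ eVariationOn γ (Icc x (x + δ / 2)) + eVariationOn γ (Icc (x + δ / 2) y) :=
          add_le_add (near x hx _ hz hxz (by linarith))
            (ih hz hzy (by push_cast at hn; linarith))
      _ = eVariationOn γ (Icc x y) := by
          simpa using eVariationOn.Icc_add_Icc γ (s := univ) hxz hzy (mem_univ _)

theorem ofReal_le_eVariationOn_of_triangle (hst : s ≤ t)
    (htri : ∀ x ∈ Icc s t, ∀ y ∈ Icc s t, ∀ z ∈ Icc s t, θ x z ≤ θ x y + θ y z)
    (hloc : ∀ c < 1, ∃ δ > 0, ∀ x ∈ Icc s t, ∀ y ∈ Icc s t, |x - y| < δ →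
      c * θ x y ≤ dist (γ x) (γ y)) :
    ENNReal.ofReal (θ s t) ≤ eVariationOn γ (Icc s t) := by
  refine ENNReal.le_of_forall_lt_one_mul_le fun a ha => ?_
  obtain ⟨δ, hδ, hlocδ⟩ := hloc a.toReal (ENNReal.toReal_lt_of_lt_ofReal (by simpa using ha))
  rw [← ENNReal.ofReal_toReal ha.ne_top, ← ENNReal.ofReal_mul ENNReal.toReal_nonneg]
  exact ofReal_mul_le_eVariationOn_of_triangle ENNReal.toReal_nonneg hδ htri hlocδ
    (left_mem_Icc.2 hst) (right_mem_Icc.2 hst) hst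

end Variation

theorem mul_le_sin_of_le_one_sub {c x : ℝ} (hx0 : 0 ≤ x) (hx1 : x ≤ 1) (hxc : x ≤ 1 - c) :
    c * x ≤ sin x := by
  rcases hx0.eq_or_lt with rfl | hx
  · simp
  nlinarith [sin_gt_sub_cube hx, mul_le_mul_of_nonneg_left hxc hx0,
    pow_le_pow_of_le_one hx0 hx1 (show 2 ≤ 3 by norm_num)]

theorem ThickOne.sin_angle_le_dist {K : Set E3} (hK : ThickOne K) {x p y : E3} (hx : x ∈ K)
    (hp : p ∈ K) (hy : y ∈ K) (hxp : x ≠ p) (hyp : y ≠ p) : sin (∠ x p y) ≤ dist x y := by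
  by_cases hcol : Collinear ℝ {x, p, y}
  · rw [collinear_iff_eq_or_eq_or_sin_eq_zero] at hcol
    rcases hcol with h | h | h
    exacts [absurd h hxp, absurd h hyp, h ▸ dist_nonneg]
  have hxy : x ≠ y := by
    rintro rfl
    exact hcol (by simpa using collinear_pair ℝ p x)
  let t : Affine.Triangle ℝ E3 := ⟨![x, p, y], affineIndependent_iff_not_collinear_set.2 hcol⟩
  have hsine : dist x y / sin (∠ x p y) = 2 * t.circumradius :=
    t.dist_div_sin_angle_eq_two_mul_circumradius (i₁ := 0) (i₂ := 1) (i₃ := 2)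
      (by decide) (by decide) (by decide)
  have hR : 1 / 2 ≤ t.circumradius :=
    hK x hx y hy p hp hxy hyp hxp t.circumcenter t.circumradius
      (t.dist_circumcenter_eq_circumradius 0) (t.dist_circumcenter_eq_circumradius 2)
      (t.dist_circumcenter_eq_circumradius 1)
  have hsin := sin_pos_of_not_collinear hcol
  rw [div_eq_iff hsin.ne'] at hsine
  nlinarith

theorem ThickOne.exists_pos_mul_angle_le_dist {γ : ℝ → E3} (hK : ThickOne (range γ))
    (hγ : Continuous γ) {p : E3} (hp : p ∈ range γ) {s t c : ℝ} (hpγ : ∀ u ∈ Icc s t, γ u ≠ p)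
    (hc : c < 1) : ∃ δ > 0, ∀ u ∈ Icc s t, ∀ v ∈ Icc s t, |u - v| < δ →
      c * ∠ (γ u) p (γ v) ≤ dist (γ u) (γ v) := by
  obtain ⟨δ, hδ, hsmall⟩ := exists_pos_angle_lt_of_continuous hγ hpγ (lt_min one_pos (sub_pos.2 hc))
  refine ⟨δ, hδ, fun u hu v hv huv => ?_⟩
  have h := (hsmall u hu v hv huv).le
  calc c * ∠ (γ u) p (γ v) ≤ sin (∠ (γ u) p (γ v)) :=
        mul_le_sin_of_le_one_sub (angle_nonneg _ _ _) (h.trans (min_le_left _ _))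
          (h.trans (min_le_right _ _))
    _ ≤ dist (γ u) (γ v) := hK.sin_angle_le_dist (mem_range_self u) hp (mem_range_self v)
          (hpγ u hu) (hpγ v hv)

theorem stmt19_general (γ : ℝ → E3) (hcont : Continuous γ)
    (hthick : ThickOne (Set.range γ))
    (p a b : E3) (s t : ℝ) (hst : s ≤ t)
    (hγs : γ s = a) (hγt : γ t = b)
    (hp : p ∈ Set.range γ)
    (hpnot : p ∉ γ '' Set.Icc s t) :
    ENNReal.ofReal (2 * Real.arcsin
        (dist (p + (dist a p)⁻¹ • (a - p)) (p + (dist b p)⁻¹ • (b - p)) / 2))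
      ≤ eVariationOn γ (Set.Icc s t) ∧
    (1 ≤ dist a p → 1 ≤ dist b p →
      dist (p + (dist a p)⁻¹ • (a - p)) (p + (dist b p)⁻¹ • (b - p)) ≤ dist a b) := by
  have hpγ : ∀ u ∈ Icc s t, γ u ≠ p := fun u hu h => hpnot ⟨u, hu, h⟩
  have hangle : ENNReal.ofReal (∠ a p b) ≤ eVariationOn γ (Icc s t) := by
    subst hγs hγt
    exact ofReal_le_eVariationOn_of_triangle (θ := fun u v => ∠ (γ u) p (γ v)) hst
      (fun x _ y _ z _ => angle_le_angle_add_angle _ _ _ _)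
      fun c hc => hthick.exists_pos_mul_angle_le_dist hcont hp hpγ hc
  refine ⟨?_, dist_radialProj_le⟩
  calc ENNReal.ofReal (2 * arcsin (dist (radialProj p a) (radialProj p b) / 2))
      = ENNReal.ofReal (∠ a p b) := by
        rw [two_mul_arcsin_dist_radialProj_div_two (hγs ▸ hpγ s (left_mem_Icc.2 hst))
          (hγt ▸ hpγ t (right_mem_Icc.2 hst))]
    _ ≤ eVariationOn γ (Icc s t) := hangle

/-- For a closed curve of unit thickness with `p` not on the subarc from `a` to `b`:
the length of that subarc is at least the spherical distance `2 arcsin(|Πa - Πb|/2)`,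
where `Π` is radial projection to the unit sphere around `p`; moreover
`|Πa - Πb| ≤ |a - b|` whenever `|a-p| ≥ 1` and `|b-p| ≥ 1`. -/
theorem stmt19 (γ : ℝ → E3) (L : ℝ) (hL : 0 < L) (hcont : Continuous γ)
    (hper : Function.Periodic γ L) (hinj : Set.InjOn γ (Set.Ico 0 L))
    (hthick : ThickOne (Set.range γ))
    (p a b : E3) (s t : ℝ) (hst : s ≤ t)
    (hγs : γ s = a) (hγt : γ t = b)
    (hp : p ∈ Set.range γ) (hpa : p ≠ a) (hpb : p ≠ b)
    (hpnot : p ∉ γ '' Set.Icc s t) :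
    ENNReal.ofReal (2 * Real.arcsin
        (dist (p + (dist a p)⁻¹ • (a - p)) (p + (dist b p)⁻¹ • (b - p)) / 2))
      ≤ eVariationOn γ (Set.Icc s t) ∧
    (1 ≤ dist a p → 1 ≤ dist b p →
      dist (p + (dist a p)⁻¹ • (a - p)) (p + (dist b p)⁻¹ • (b - p)) ≤ dist a b) :=
  stmt19_general γ hcont hthick p a b s t hst hγs hγt hp hpnot
end
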